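/- Let A and Ã be two measurable symmetric coefficients on (Ω∪Ω_δ)² both satisfying 0 < r ≤ A, Ã ≤ R < ∞ a.e., and let T_δ^A and T_δ^Ã be the corresponding bilinear forms. Let f be a linear functional on S_δ(Ω) with |⟨f, v⟩| ≤ M |v|_{S_δ(Ω)} for all v ∈ S_δ(Ω). If u, ũ ∈ S_δ(Ω) satisfy T_δ^A[u, v] = ⟨f, v⟩ and T_δ^Ã[ũ, v] = ⟨f, v⟩ for all v ∈ S_δ(Ω), then |u − ũ|_{S_δ(Ω)} ≤ ‖A − Ã‖_{L^∞((Ω∪Ω_δ)²)} · M / r² (stability of the solution with respect to the diffusion coefficient). -/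

import Mathlib

/-!
Write `w = u - ũ`. Testing the equation for `u` with `w` and the one for `ũ` with `w` gives
`T^A[w, w] = T^Ã[ũ, w] - T^A[ũ, w] = ∫∫ (Ã - A) γ_δ (ũ(y) - ũ(x)) (w(y) - w(x))`.
Coercivity bounds the left side below by `r |w|²`, Cauchy–Schwarz bounds the right side by
`‖A - Ã‖_∞ |ũ| |w|`, and testing the equation for `ũ` with `ũ` itself gives
`r |ũ|² ≤ ⟨f, ũ⟩ ≤ M |ũ|`. The argument runs in `L²((Ω ∪ Ω_δ)²)`, applied to the weighted
difference quotients `√γ_δ(|y - x|) (v(y) - v(x))`, whose squared norm is `|v|²_{S_δ(Ω)}`.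
-/

open MeasureTheory Metric Set Filter

noncomputable section

/-- Euclidean space ℝ^d. -/
abbrev Eu (d : ℕ) : Type := EuclideanSpace ℝ (Fin d)

/-- The nonlocal boundary collar Ω_δ = {x ∉ Ω : dist(x, ∂Ω) < δ}. -/
def NLcollar (d : ℕ) (Ω : Set (Eu d)) (δ : ℝ) : Set (Eu d) :=
  {x | x ∉ Ω ∧ Metric.infDist x (frontier Ω) < δ}

/-- The extended domain Ω ∪ Ω_δ. -/
def NLdom (d : ℕ) (Ω : Set (Eu d)) (δ : ℝ) : Set (Eu d) := Ω ∪ NLcollar d Ω δ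

/-- The rescaled kernel γ_δ(r) = δ^{-(d+2)} γ₁(r/δ). -/
def NLker (d : ℕ) (γ₁ : ℝ → ℝ) (δ r : ℝ) : ℝ := (δ ^ (d + 2))⁻¹ * γ₁ (r / δ)

/-- The squared nonlocal energy seminorm |u|²_{S_δ(Ω)}. -/
def NLenergySq (d : ℕ) (Ω : Set (Eu d)) (γ₁ : ℝ → ℝ) (δ : ℝ) (u : Eu d → ℝ) : ℝ :=
  ∫ x in NLdom d Ω δ, ∫ y in NLdom d Ω δ, NLker d γ₁ δ (dist y x) * (u y - u x) ^ 2

/-- Membership in the nonlocal energy space S_δ(Ω): u ∈ L²(Ω∪Ω_δ), finite nonlocal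
energy, and u = 0 a.e. on the collar Ω_δ. -/
def NLMemS (d : ℕ) (Ω : Set (Eu d)) (γ₁ : ℝ → ℝ) (δ : ℝ) (u : Eu d → ℝ) : Prop :=
  MemLp u 2 (volume.restrict (NLdom d Ω δ)) ∧
  IntegrableOn
    (fun p : Eu d × Eu d => NLker d γ₁ δ (dist p.2 p.1) * (u p.2 - u p.1) ^ 2)
    (NLdom d Ω δ ×ˢ NLdom d Ω δ) ∧
  ∀ᵐ x ∂(volume.restrict (NLcollar d Ω δ)), u x = 0

/-- The bilinear form T_δ with coefficient A. -/
def NLTform (d : ℕ) (Ω : Set (Eu d)) (γ₁ : ℝ → ℝ) (δ : ℝ)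
    (A : Eu d → Eu d → ℝ) (v w : Eu d → ℝ) : ℝ :=
  ∫ x in NLdom d Ω δ, ∫ y in NLdom d Ω δ,
    A x y * NLker d γ₁ δ (dist x y) * (v y - v x) * (w y - w x)

section WeightedL2

variable {α : Type*} [MeasurableSpace α] {μ : Measure α}

theorem le_div_of_mul_sq_le_mul {x r c : ℝ} (hx : 0 ≤ x) (hr : 0 < r) (hc : 0 ≤ c)
    (h : r * x ^ 2 ≤ c * x) : x ≤ c / r := by
  rw [le_div_iff₀ hr]
  rcases hx.eq_or_lt with rfl | hx
  · simpa using hc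
  · nlinarith

theorem ae_abs_le_toReal_eLpNorm_top {g : α → ℝ} {C : ℝ} (hC : ∀ᵐ x ∂μ, |g x| ≤ C) :
    ∀ᵐ x ∂μ, |g x| ≤ (eLpNorm g ⊤ μ).toReal := by
  have hfin : eLpNormEssSup g μ ≠ ⊤ := (eLpNormEssSup_lt_top_of_ae_bound hC).ne
  filter_upwards [enorm_ae_le_eLpNormEssSup g μ] with x hx
  simpa [eLpNorm_exponent_top] using ENNReal.toReal_mono hfin hx

theorem integrable_mul_mul_of_ae_abs_le {a f g : α → ℝ} {C : ℝ}
    (ha : AEStronglyMeasurable a μ) (haC : ∀ᵐ x ∂μ, |a x| ≤ C)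
    (hf : MemLp f 2 μ) (hg : MemLp g 2 μ) :
    Integrable (fun x => a x * f x * g x) μ := by
  simpa only [mul_assoc, Pi.mul_apply] using (hf.integrable_mul hg).bdd_mul ha haC

theorem integral_abs_mul_abs_le {f g : α → ℝ} (hf : MemLp f 2 μ) (hg : MemLp g 2 μ) :
    ∫ x, |f x| * |g x| ∂μ ≤ √(∫ x, f x ^ 2 ∂μ) * √(∫ x, g x ^ 2 ∂μ) := by
  have h := integral_mul_norm_le_Lp_mul_Lq Real.HolderConjugate.two_two
    (by simpa using hf) (by simpa using hg)
  simpa [Real.sqrt_eq_rpow, Real.rpow_two] using h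

theorem integral_mul_mul_le_of_ae_abs_le {a f g : α → ℝ} {ε : ℝ} (hε : 0 ≤ ε)
    (ha : AEStronglyMeasurable a μ) (haε : ∀ᵐ x ∂μ, |a x| ≤ ε)
    (hf : MemLp f 2 μ) (hg : MemLp g 2 μ) :
    ∫ x, a x * f x * g x ∂μ ≤ ε * (√(∫ x, f x ^ 2 ∂μ) * √(∫ x, g x ^ 2 ∂μ)) := by
  have hfg : Integrable (fun x => |f x| * |g x|) μ := by
    simpa only [Real.norm_eq_abs, Pi.mul_def] using hf.norm.integrable_mul hg.norm
  calc ∫ x, a x * f x * g x ∂μ ≤ ∫ x, ε * (|f x| * |g x|) ∂μ := by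
        refine integral_mono_ae (integrable_mul_mul_of_ae_abs_le ha haε hf hg)
          (hfg.const_mul ε) ?_
        filter_upwards [haε] with x hx
        calc a x * f x * g x ≤ |a x| * (|f x| * |g x|) := by
              rw [← abs_mul, ← abs_mul, ← mul_assoc]; exact le_abs_self _
          _ ≤ ε * (|f x| * |g x|) := by gcongr
    _ = ε * ∫ x, |f x| * |g x| ∂μ := integral_const_mul ε _
    _ ≤ ε * (√(∫ x, f x ^ 2 ∂μ) * √(∫ x, g x ^ 2 ∂μ)) := by
        gcongr; exact integral_abs_mul_abs_le hf hg

theorem mul_integral_sq_le_integral_mul_mul {a f : α → ℝ} {r R : ℝ} (hr : 0 ≤ r)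
    (ha : AEStronglyMeasurable a μ) (hbd : ∀ᵐ x ∂μ, r ≤ a x ∧ a x ≤ R) (hf : MemLp f 2 μ) :
    r * ∫ x, f x ^ 2 ∂μ ≤ ∫ x, a x * f x * f x ∂μ := by
  have haR : ∀ᵐ x ∂μ, |a x| ≤ R := hbd.mono fun x hx => abs_le.2 ⟨by linarith, hx.2⟩
  rw [← integral_const_mul]
  refine integral_mono_ae (hf.integrable_sq.const_mul r)
    (integrable_mul_mul_of_ae_abs_le ha haR hf hf) ?_
  filter_upwards [hbd] with x hx
  rw [mul_assoc, ← sq]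
  exact mul_le_mul_of_nonneg_right hx.1 (sq_nonneg _)

theorem sqrt_integral_sq_sub_le {a a' f f' : α → ℝ} {r R ε M : ℝ} (hr : 0 < r) (hε : 0 ≤ ε)
    (hM : 0 ≤ M) (ha : AEStronglyMeasurable a μ) (ha' : AEStronglyMeasurable a' μ)
    (hbd : ∀ᵐ x ∂μ, (r ≤ a x ∧ a x ≤ R) ∧ (r ≤ a' x ∧ a' x ≤ R))
    (haa' : ∀ᵐ x ∂μ, |a x - a' x| ≤ ε) (hf : MemLp f 2 μ) (hf' : MemLp f' 2 μ)
    (hsol : ∫ x, a x * f x * (f x - f' x) ∂μ = ∫ x, a' x * f' x * (f x - f' x) ∂μ)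
    (hf'M : ∫ x, a' x * f' x * f' x ∂μ ≤ M * √(∫ x, f' x ^ 2 ∂μ)) :
    √(∫ x, (f x - f' x) ^ 2 ∂μ) ≤ ε * M / r ^ 2 := by
  have hg : MemLp (fun x => f x - f' x) 2 μ := hf.sub hf'
  have ha_bd : ∀ᵐ x ∂μ, r ≤ a x ∧ a x ≤ R := hbd.mono fun _ hx => hx.1
  have ha'_bd : ∀ᵐ x ∂μ, r ≤ a' x ∧ a' x ≤ R := hbd.mono fun _ hx => hx.2
  have haR : ∀ᵐ x ∂μ, |a x| ≤ R := ha_bd.mono fun x hx => abs_le.2 ⟨by linarith, hx.2⟩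
  have ha'a : ∀ᵐ x ∂μ, |a' x - a x| ≤ ε := haa'.mono fun x hx => by rwa [abs_sub_comm]
  have hf'_le : √(∫ x, f' x ^ 2 ∂μ) ≤ M / r := by
    refine le_div_of_mul_sq_le_mul (Real.sqrt_nonneg _) hr hM ?_
    rw [Real.sq_sqrt (integral_nonneg fun _ => sq_nonneg _)]
    exact (mul_integral_sq_le_integral_mul_mul hr.le ha' ha'_bd hf').trans hf'M
  have hdiff : ∫ x, a x * (f x - f' x) * (f x - f' x) ∂μ
      = ∫ x, (a' x - a x) * f' x * (f x - f' x) ∂μ := by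
    have e1 : ∫ x, a x * (f x - f' x) * (f x - f' x) ∂μ
        = ∫ x, a x * f x * (f x - f' x) ∂μ - ∫ x, a x * f' x * (f x - f' x) ∂μ := by
      rw [← integral_sub (integrable_mul_mul_of_ae_abs_le ha haR hf hg)
        (integrable_mul_mul_of_ae_abs_le ha haR hf' hg)]
      congr with x; ring
    have e2 : ∫ x, (a' x - a x) * f' x * (f x - f' x) ∂μ
        = ∫ x, a' x * f' x * (f x - f' x) ∂μ - ∫ x, a x * f' x * (f x - f' x) ∂μ := by
      rw [← integral_sub (integrable_mul_mul_of_ae_abs_le ha' (ha'_bd.mono fun x hx =>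
        abs_le.2 ⟨by linarith, hx.2⟩) hf' hg) (integrable_mul_mul_of_ae_abs_le ha haR hf' hg)]
      congr with x; ring
    rw [e1, e2, hsol]
  have hg_le : √(∫ x, (f x - f' x) ^ 2 ∂μ) ≤ ε * √(∫ x, f' x ^ 2 ∂μ) / r := by
    refine le_div_of_mul_sq_le_mul (Real.sqrt_nonneg _) hr (by positivity) ?_
    rw [Real.sq_sqrt (integral_nonneg fun _ => sq_nonneg _)]
    calc r * ∫ x, (f x - f' x) ^ 2 ∂μ ≤ ∫ x, a x * (f x - f' x) * (f x - f' x) ∂μ :=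
          mul_integral_sq_le_integral_mul_mul hr.le ha ha_bd hg
      _ = ∫ x, (a' x - a x) * f' x * (f x - f' x) ∂μ := hdiff
      _ ≤ ε * (√(∫ x, f' x ^ 2 ∂μ) * √(∫ x, (f x - f' x) ^ 2 ∂μ)) :=
          integral_mul_mul_le_of_ae_abs_le hε (ha'.sub ha) ha'a hf' hg
      _ = ε * √(∫ x, f' x ^ 2 ∂μ) * √(∫ x, (f x - f' x) ^ 2 ∂μ) := by ring
  calc √(∫ x, (f x - f' x) ^ 2 ∂μ) ≤ ε * √(∫ x, f' x ^ 2 ∂μ) / r := hg_le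
    _ ≤ ε * (M / r) / r := by gcongr
    _ = ε * M / r ^ 2 := by field_simp

end WeightedL2

theorem volume_restrict_prod {α β : Type*} [MeasureSpace α] [MeasureSpace β]
    [SFinite (volume : Measure α)] [SFinite (volume : Measure β)] (s : Set α) (t : Set β) :
    (volume : Measure (α × β)).restrict (s ×ˢ t)
      = (volume.restrict s).prod (volume.restrict t) := by
  rw [Measure.prod_restrict, ← Measure.volume_eq_prod]

def NLgrad (d : ℕ) (γ₁ : ℝ → ℝ) (δ : ℝ) (v : Eu d → ℝ) (p : Eu d × Eu d) : ℝ :=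
  √(NLker d γ₁ δ (dist p.2 p.1)) * (v p.2 - v p.1)

section Nonlocal

variable {d : ℕ} {Ω : Set (Eu d)} {γ₁ : ℝ → ℝ} {δ : ℝ}

theorem NLker_nonneg (hγ0 : ∀ r, 0 ≤ γ₁ r) (hδ : 0 ≤ δ) (t : ℝ) : 0 ≤ NLker d γ₁ δ t :=
  mul_nonneg (inv_nonneg.2 (by positivity)) (hγ0 _)

theorem measurable_NLker_dist (hγmono : AntitoneOn γ₁ (Ici 0)) (hδ : 0 ≤ δ) :
    Measurable fun p : Eu d × Eu d => NLker d γ₁ δ (dist p.2 p.1) := by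
  have hanti : Antitone fun t : ℝ => γ₁ (max t 0) := fun a b hab =>
    hγmono (le_max_right a 0) (le_max_right b 0) (max_le_max hab le_rfl)
  have heq : (fun p : Eu d × Eu d => NLker d γ₁ δ (dist p.2 p.1))
      = fun p => (δ ^ (d + 2))⁻¹ * γ₁ (max (dist p.2 p.1 / δ) 0) := by
    funext p
    rw [NLker, max_eq_left (div_nonneg dist_nonneg hδ)]
  rw [heq]
  exact (hanti.measurable.comp
    ((continuous_snd.dist continuous_fst).measurable.div_const δ)).const_mul _

theorem NLgrad_mul_NLgrad (hγ0 : ∀ r, 0 ≤ γ₁ r) (hδ : 0 ≤ δ) (v w : Eu d → ℝ)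
    (p : Eu d × Eu d) :
    NLgrad d γ₁ δ v p * NLgrad d γ₁ δ w p
      = NLker d γ₁ δ (dist p.2 p.1) * (v p.2 - v p.1) * (w p.2 - w p.1) := by
  rw [NLgrad, NLgrad, mul_mul_mul_comm, Real.mul_self_sqrt (NLker_nonneg hγ0 hδ _), mul_assoc]

theorem NLgrad_sq (hγ0 : ∀ r, 0 ≤ γ₁ r) (hδ : 0 ≤ δ) (v : Eu d → ℝ) (p : Eu d × Eu d) :
    NLgrad d γ₁ δ v p ^ 2 = NLker d γ₁ δ (dist p.2 p.1) * (v p.2 - v p.1) ^ 2 := by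
  rw [sq, NLgrad_mul_NLgrad hγ0 hδ, mul_assoc, ← sq]

theorem NLgrad_sub (u u' : Eu d → ℝ) :
    NLgrad d γ₁ δ (fun x => u x - u' x) = NLgrad d γ₁ δ u - NLgrad d γ₁ δ u' := by
  funext p
  simp only [NLgrad, Pi.sub_apply]
  ring

theorem NLMemS.memLp_NLgrad (hγ0 : ∀ r, 0 ≤ γ₁ r) (hγmono : AntitoneOn γ₁ (Ici 0))
    (hδ : 0 ≤ δ) {v : Eu d → ℝ} (hv : NLMemS d Ω γ₁ δ v) :
    MemLp (NLgrad d γ₁ δ v) 2 (volume.restrict (NLdom d Ω δ ×ˢ NLdom d Ω δ)) := by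
  have hmeas : AEStronglyMeasurable (NLgrad d γ₁ δ v)
      (volume.restrict (NLdom d Ω δ ×ˢ NLdom d Ω δ)) := by
    rw [volume_restrict_prod]
    have hv' := hv.1.aestronglyMeasurable
    exact ((measurable_NLker_dist hγmono hδ).sqrt.aestronglyMeasurable).mul
      (hv'.comp_snd.sub hv'.comp_fst)
  refine (memLp_two_iff_integrable_sq hmeas).2 ?_
  simp only [NLgrad_sq hγ0 hδ]
  exact hv.2.1

theorem NLMemS.sub (hγ0 : ∀ r, 0 ≤ γ₁ r) (hγmono : AntitoneOn γ₁ (Ici 0)) (hδ : 0 ≤ δ)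
    {u u' : Eu d → ℝ} (hu : NLMemS d Ω γ₁ δ u) (hu' : NLMemS d Ω γ₁ δ u') :
    NLMemS d Ω γ₁ δ (fun x => u x - u' x) := by
  refine ⟨hu.1.sub hu'.1, ?_, ?_⟩
  · have h := ((hu.memLp_NLgrad hγ0 hγmono hδ).sub
      (hu'.memLp_NLgrad hγ0 hγmono hδ)).integrable_sq
    simpa only [IntegrableOn, ← NLgrad_sub, NLgrad_sq hγ0 hδ] using h
  · filter_upwards [hu.2.2, hu'.2.2] with x hx hx'
    rw [hx, hx', sub_zero]

theorem NLenergySq_eq_integral (hγ0 : ∀ r, 0 ≤ γ₁ r) (hδ : 0 ≤ δ) {v : Eu d → ℝ}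
    (hv : NLMemS d Ω γ₁ δ v) :
    NLenergySq d Ω γ₁ δ v
      = ∫ p, NLgrad d γ₁ δ v p ^ 2 ∂(volume.restrict (NLdom d Ω δ ×ˢ NLdom d Ω δ)) := by
  have hint := hv.2.1
  rw [IntegrableOn, volume_restrict_prod] at hint
  simp only [NLenergySq, NLgrad_sq hγ0 hδ, volume_restrict_prod]
  exact integral_integral hint

theorem NLTform_eq_integral (hγ0 : ∀ r, 0 ≤ γ₁ r) (hγmono : AntitoneOn γ₁ (Ici 0))
    (hδ : 0 ≤ δ) {B : Eu d → Eu d → ℝ} {C : ℝ}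
    (hB : AEStronglyMeasurable (fun p : Eu d × Eu d => B p.1 p.2)
      (volume.restrict (NLdom d Ω δ ×ˢ NLdom d Ω δ)))
    (hBC : ∀ᵐ p ∂(volume.restrict (NLdom d Ω δ ×ˢ NLdom d Ω δ)), |B p.1 p.2| ≤ C)
    {v w : Eu d → ℝ} (hv : NLMemS d Ω γ₁ δ v) (hw : NLMemS d Ω γ₁ δ w) :
    NLTform d Ω γ₁ δ B v w
      = ∫ p, B p.1 p.2 * NLgrad d γ₁ δ v p * NLgrad d γ₁ δ w p
          ∂(volume.restrict (NLdom d Ω δ ×ˢ NLdom d Ω δ)) := by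
  have hint := integrable_mul_mul_of_ae_abs_le hB hBC (hv.memLp_NLgrad hγ0 hγmono hδ)
    (hw.memLp_NLgrad hγ0 hγmono hδ)
  rw [volume_restrict_prod] at hint ⊢
  calc NLTform d Ω γ₁ δ B v w
      = ∫ x in NLdom d Ω δ, ∫ y in NLdom d Ω δ,
          B x y * NLgrad d γ₁ δ v (x, y) * NLgrad d γ₁ δ w (x, y) := by
        refine integral_congr_ae (ae_of_all _ fun x => integral_congr_ae (ae_of_all _ fun y => ?_))
        simp only [mul_assoc, NLgrad_mul_NLgrad hγ0 hδ, dist_comm x y]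
    _ = _ := integral_integral hint

end Nonlocal

theorem nonlocal_stability_general
    (d : ℕ) (Ω : Set (Eu d))
    (γ₁ : ℝ → ℝ) (hγ0 : ∀ r, 0 ≤ γ₁ r) (hγmono : AntitoneOn γ₁ (Ici 0))
    (δ : ℝ) (hδ : 0 < δ)
    (A A' : Eu d → Eu d → ℝ)
    (hAmeas : Measurable fun p : Eu d × Eu d => A p.1 p.2)
    (hA'meas : Measurable fun p : Eu d × Eu d => A' p.1 p.2)
    (r R : ℝ) (hr : 0 < r)
    (hAbd : ∀ᵐ p ∂(volume.restrict (NLdom d Ω δ ×ˢ NLdom d Ω δ)),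
      (r ≤ A p.1 p.2 ∧ A p.1 p.2 ≤ R) ∧ (r ≤ A' p.1 p.2 ∧ A' p.1 p.2 ≤ R))
    (F : (Eu d → ℝ) → ℝ)
    (M : ℝ) (hM0 : 0 ≤ M)
    (hFbd : ∀ v : Eu d → ℝ, NLMemS d Ω γ₁ δ v →
      |F v| ≤ M * Real.sqrt (NLenergySq d Ω γ₁ δ v))
    (u u' : Eu d → ℝ) (huS : NLMemS d Ω γ₁ δ u) (hu'S : NLMemS d Ω γ₁ δ u')
    (hsol : ∀ v : Eu d → ℝ, NLMemS d Ω γ₁ δ v → NLTform d Ω γ₁ δ A u v = F v)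
    (hsol' : ∀ v : Eu d → ℝ, NLMemS d Ω γ₁ δ v → NLTform d Ω γ₁ δ A' u' v = F v) :
    Real.sqrt (NLenergySq d Ω γ₁ δ (fun x => u x - u' x)) ≤
      (eLpNorm (fun p : Eu d × Eu d => A p.1 p.2 - A' p.1 p.2) ⊤
        (volume.restrict (NLdom d Ω δ ×ˢ NLdom d Ω δ))).toReal * M / r ^ 2 := by
  have hw := huS.sub hγ0 hγmono hδ.le hu'S
  set μ : Measure (Eu d × Eu d) := volume.restrict (NLdom d Ω δ ×ˢ NLdom d Ω δ)
  have hA : AEStronglyMeasurable (fun p : Eu d × Eu d => A p.1 p.2) μ :=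
    hAmeas.aestronglyMeasurable
  have hA' : AEStronglyMeasurable (fun p : Eu d × Eu d => A' p.1 p.2) μ :=
    hA'meas.aestronglyMeasurable
  have hAR : ∀ᵐ p ∂μ, |A p.1 p.2| ≤ R :=
    hAbd.mono fun p hp => abs_le.2 ⟨by linarith [hp.1.1], hp.1.2⟩
  have hA'R : ∀ᵐ p ∂μ, |A' p.1 p.2| ≤ R :=
    hAbd.mono fun p hp => abs_le.2 ⟨by linarith [hp.2.1], hp.2.2⟩
  have hgap := ae_abs_le_toReal_eLpNorm_top
    (g := fun p : Eu d × Eu d => A p.1 p.2 - A' p.1 p.2) (C := R - r) (hAbd.mono fun p hp =>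
    abs_sub_le_iff.2 ⟨by linarith [hp.1.2, hp.2.1], by linarith [hp.1.1, hp.2.2]⟩)
  have hTA := fun {v w} => NLTform_eq_integral (v := v) (w := w) hγ0 hγmono hδ.le hA hAR
  have hTA' := fun {v w} => NLTform_eq_integral (v := v) (w := w) hγ0 hγmono hδ.le hA' hA'R
  rw [NLenergySq_eq_integral hγ0 hδ.le hw, NLgrad_sub]
  refine sqrt_integral_sq_sub_le hr ENNReal.toReal_nonneg hM0 hA hA' hAbd hgap
    (huS.memLp_NLgrad hγ0 hγmono hδ.le) (hu'S.memLp_NLgrad hγ0 hγmono hδ.le) ?_ ?_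
  · have h := (hTA huS hw).symm.trans ((hsol _ hw).trans ((hsol' _ hw).symm.trans (hTA' hu'S hw)))
    simpa only [NLgrad_sub, Pi.sub_apply] using h
  · rw [← hTA' hu'S hu'S, hsol' u' hu'S, ← NLenergySq_eq_integral hγ0 hδ.le hu'S]
    exact (le_abs_self _).trans (hFbd u' hu'S)

/-- Stability of the nonlocal solution with respect to the diffusion coefficient:
if u and ũ solve the nonlocal problem with the same right-hand side f and coefficients
A and Ã respectively, then |u − ũ|_{S_δ(Ω)} ≤ ‖A − Ã‖_{L^∞} M / r². -/
theorem nonlocal_stability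
    (d : ℕ) (hd : 1 ≤ d) (Ω : Set (Eu d))
    (hΩopen : IsOpen Ω) (hΩbdd : Bornology.IsBounded Ω) (hΩne : Ω.Nonempty)
    (γ₁ : ℝ → ℝ) (hγ0 : ∀ r, 0 ≤ γ₁ r) (hγmono : AntitoneOn γ₁ (Ici 0))
    (hγsupp : ∀ r, 1 < r → γ₁ r = 0)
    (hγnorm : (∫ z in ball (0 : Eu d) 1, γ₁ ‖z‖ * ‖z‖ ^ 2) = (d : ℝ))
    (δ : ℝ) (hδ : 0 < δ)
    (A A' : Eu d → Eu d → ℝ)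
    (hAmeas : Measurable fun p : Eu d × Eu d => A p.1 p.2)
    (hA'meas : Measurable fun p : Eu d × Eu d => A' p.1 p.2)
    (hAsym : ∀ x y, A x y = A y x) (hA'sym : ∀ x y, A' x y = A' y x)
    (r R : ℝ) (hr : 0 < r)
    (hAbd : ∀ᵐ p ∂(volume.restrict (NLdom d Ω δ ×ˢ NLdom d Ω δ)),
      (r ≤ A p.1 p.2 ∧ A p.1 p.2 ≤ R) ∧ (r ≤ A' p.1 p.2 ∧ A' p.1 p.2 ≤ R))
    (F : (Eu d → ℝ) → ℝ)
    (hFadd : ∀ v w : Eu d → ℝ, F (v + w) = F v + F w)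
    (hFsmul : ∀ (c : ℝ) (v : Eu d → ℝ), F (c • v) = c * F v)
    (M : ℝ) (hM0 : 0 ≤ M)
    (hFbd : ∀ v : Eu d → ℝ, NLMemS d Ω γ₁ δ v →
      |F v| ≤ M * Real.sqrt (NLenergySq d Ω γ₁ δ v))
    (u u' : Eu d → ℝ) (huS : NLMemS d Ω γ₁ δ u) (hu'S : NLMemS d Ω γ₁ δ u')
    (hsol : ∀ v : Eu d → ℝ, NLMemS d Ω γ₁ δ v → NLTform d Ω γ₁ δ A u v = F v)
    (hsol' : ∀ v : Eu d → ℝ, NLMemS d Ω γ₁ δ v → NLTform d Ω γ₁ δ A' u' v = F v) :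
    Real.sqrt (NLenergySq d Ω γ₁ δ (fun x => u x - u' x)) ≤
      (eLpNorm (fun p : Eu d × Eu d => A p.1 p.2 - A' p.1 p.2) ⊤
        (volume.restrict (NLdom d Ω δ ×ˢ NLdom d Ω δ))).toReal * M / r ^ 2 :=
  nonlocal_stability_general d Ω γ₁ hγ0 hγmono δ hδ A A' hAmeas hA'meas r R hr hAbd F M hM0 hFbd u
    u' huS hu'S hsol hsol'
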